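/- Let 2 ≤ e ≤ m be integers and let A be a subset of {1, …, m−1} of cardinality e−1 such that gcd(A ∪ {m}) = 1. Then the additive submonoid S of ℕ generated by {m} + (A ∪ {0}) = {m + a : a ∈ A ∪ {0}} is a packed numerical semigroup with multiplicity m and embedding dimension e, and msg(S) = {m + a : a ∈ A ∪ {0}}. -/

import Mathlib

open scoped Pointwise

/-- A numerical semigroup: an additive submonoid of ℕ with finite complement. -/
def IsNumericalSemigroup (S : Set ℕ) : Prop :=
  0 ∈ S ∧ (∀ a ∈ S, ∀ b ∈ S, a + b ∈ S) ∧ Sᶜ.Finite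

/-- Multiplicity: the least positive element. -/
noncomputable def mult (S : Set ℕ) : ℕ := sInf (S \ {0})

/-- Minimal system of generators: (S∖{0}) ∖ ((S∖{0})+(S∖{0})). -/
def msg (S : Set ℕ) : Set ℕ := (S \ {0}) \ ((S \ {0}) + (S \ {0}))

/-- Embedding dimension: cardinality of the minimal system of generators. -/
noncomputable def edim (S : Set ℕ) : ℕ := (msg S).ncard

/-- The submonoid of (ℕ,+) generated by a set, as a set. -/
def genSet (B : Set ℕ) : Set ℕ := (AddSubmonoid.closure B : Set ℕ)

/-- Packed numerical semigroup: msg(S) ⊆ {m(S),…,2m(S)−1}. -/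
def IsPacked (S : Set ℕ) : Prop := msg S ⊆ Set.Icc (mult S) (2 * mult S - 1)

/-- L(m,e): numerical semigroups with multiplicity m and embedding dimension e. -/
def Lset (m e : ℕ) : Set (Set ℕ) :=
  {S | IsNumericalSemigroup S ∧ mult S = m ∧ edim S = e}

/-- C(m,e): packed numerical semigroups in L(m,e). -/
def Cset (m e : ℕ) : Set (Set ℕ) := {S ∈ Lset m e | IsPacked S}

/-- φ(S): the monoid generated by {m + (x mod m) : x ∈ msg(S)}, m = mult S. -/
noncomputable def phi (S : Set ℕ) : Set ℕ :=
  genSet ((fun x => mult S + x % mult S) '' msg S)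

/-- The class [S] = {T ∈ L(m,e) : φ(T) = φ(S)}. -/
def classOf (m e : ℕ) (S : Set ℕ) : Set (Set ℕ) := {T ∈ Lset m e | phi T = phi S}

/-- Frobenius number: the largest element of the complement. -/
noncomputable def Frob (S : Set ℕ) : ℕ := sSup Sᶜ

/-- Genus: the cardinality of the complement. -/
noncomputable def genus (S : Set ℕ) : ℕ := Sᶜ.ncard

/-- The Apéry set of n in S. -/
def Ap (S : Set ℕ) (n : ℕ) : Set ℕ := {s ∈ S | ¬ ∃ t ∈ S, s = t + n}

/-- Minimal elements of a set in a partial order. -/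
def minimalsOf {β : Type*} [PartialOrder β] (X : Set β) : Set β :=
  {x ∈ X | ∀ y ∈ X, y ≤ x → y = x}

/-!
Every generator `m + a` with `a ∈ A ∪ {0}` lies in `[m, 2m)`, while a sum of two nonzero elements
of the generated monoid is at least `2m`; so no generator is redundant, `m` is the least positive
element, and the semigroup is packed. Shifting by `m` does not change the gcd, so the generators
are coprime and the complement is finite.
-/

namespace Nat

lemma setGcd_coe_finset (s : Finset ℕ) : setGcd ↑s = s.gcd id :=
  Nat.dvd_antisymm (Finset.dvd_gcd fun _ hn => setGcd_dvd_of_mem hn)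
    (dvd_setGcd_iff.mpr fun _ hn => Finset.gcd_dvd hn)

lemma setGcd_image_add_insert_zero (m : ℕ) (s : Set ℕ) :
    setGcd ((m + ·) '' insert 0 s) = setGcd (insert m s) := by
  refine Nat.dvd_antisymm (dvd_setGcd_iff.mpr ?_) (dvd_setGcd_iff.mpr ?_)
  · have hm : setGcd ((m + ·) '' insert 0 s) ∣ m :=
      setGcd_dvd_of_mem ⟨0, Set.mem_insert _ _, rfl⟩
    rintro n (rfl | hn)
    · exact hm
    · exact (Nat.dvd_add_right hm).mp (setGcd_dvd_of_mem ⟨n, Set.mem_insert_of_mem _ hn, rfl⟩)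
  · rintro _ ⟨n, hn, rfl⟩
    have hm := setGcd_dvd_of_mem (Set.mem_insert m s)
    rcases hn with rfl | hn
    · simpa using hm
    · exact dvd_add hm (setGcd_dvd_of_mem (Set.mem_insert_of_mem _ hn))

end Nat

lemma isNumericalSemigroup_genSet {B : Set ℕ} (hB : Nat.setGcd B = 1) :
    IsNumericalSemigroup (genSet B) := by
  refine ⟨zero_mem _, fun a ha b hb => add_mem ha hb, ?_⟩
  obtain ⟨n, hn⟩ := Nat.exists_mem_closure_of_ge B
  refine (Set.finite_Iio n).subset fun k hk => ?_
  by_contra hkn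
  exact hk (hn k (not_lt.mp hkn) (hB ▸ one_dvd k))

lemma eq_zero_or_le_of_mem_genSet {B : Set ℕ} {m s : ℕ} (hB : ∀ b ∈ B, m ≤ b)
    (hs : s ∈ genSet B) : s = 0 ∨ m ≤ s := by
  induction hs using AddSubmonoid.closure_induction with
  | mem b hb => exact .inr (hB b hb)
  | zero => exact .inl rfl
  | add x y _ _ hx hy => omega

lemma mult_genSet_of_isLeast {B : Set ℕ} {m : ℕ} (hm : 0 < m) (hB : IsLeast B m) :
    mult (genSet B) = m := by
  have hmS : m ∈ genSet B \ {0} := ⟨AddSubmonoid.subset_closure hB.1, hm.ne'⟩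
  refine le_antisymm (Nat.sInf_le hmS) (le_csInf ⟨m, hmS⟩ ?_)
  rintro s ⟨hs, hs0⟩
  exact (eq_zero_or_le_of_mem_genSet (fun _ hb => hB.2 hb) hs).resolve_left hs0

lemma msg_genSet_subset (B : Set ℕ) : msg (genSet B) ⊆ B := by
  rintro s ⟨⟨hs, hs0⟩, hirr⟩
  have key : ∀ t ∈ genSet B, t = 0 ∨ t ∈ B ∨ t ∈ (genSet B \ {0}) + (genSet B \ {0}) := by
    intro t ht
    induction ht using AddSubmonoid.closure_induction with
    | mem x hx => exact .inr (.inl hx)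
    | zero => exact .inl rfl
    | add x y hx hy ihx ihy =>
      rcases eq_or_ne x 0 with rfl | hx0
      · simpa using ihy
      rcases eq_or_ne y 0 with rfl | hy0
      · simpa using ihx
      exact .inr (.inr ⟨x, ⟨hx, hx0⟩, y, ⟨hy, hy0⟩, rfl⟩)
  exact ((key s hs).resolve_left hs0).resolve_right hirr

lemma msg_genSet_of_subset_Ico {B : Set ℕ} {m : ℕ} (hB : B ⊆ Set.Ico m (2 * m)) :
    msg (genSet B) = B := by
  refine (msg_genSet_subset B).antisymm fun b hb => ?_
  have hle : ∀ s ∈ genSet B, s = 0 ∨ m ≤ s :=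
    fun _ hs => eq_zero_or_le_of_mem_genSet (fun _ hb => (hB hb).1) hs
  obtain ⟨hmb, hb2m⟩ := hB hb
  refine ⟨⟨AddSubmonoid.subset_closure hb, by simp only [Set.mem_singleton_iff]; omega⟩, ?_⟩
  rintro ⟨u, ⟨hu, hu0⟩, v, ⟨hv, hv0⟩, huv⟩
  change u + v = b at huv
  have := hle u hu
  have := hle v hv
  simp only [Set.mem_singleton_iff] at hu0 hv0
  omega

lemma isPacked_genSet {B : Set ℕ} {m : ℕ} (hmB : m ∈ B) (hB : B ⊆ Set.Ico m (2 * m)) :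
    IsPacked (genSet B) := by
  have hm : 0 < m := by have := hB hmB; simp only [Set.mem_Ico] at this; omega
  rw [IsPacked, msg_genSet_of_subset_Ico hB,
    mult_genSet_of_isLeast hm ⟨hmB, fun _ hb => (hB hb).1⟩]
  intro b hb
  have := hB hb
  simp only [Set.mem_Ico, Set.mem_Icc] at this ⊢
  omega

/-- if A ⊆ {1,…,m−1}, |A| = e−1 and gcd(A ∪ {m}) = 1, then
⟨{m} + (A ∪ {0})⟩ is a packed numerical semigroup with multiplicity m and
embedding dimension e, with minimal system of generators {m + a : a ∈ A ∪ {0}}. -/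
theorem stmt3 (m e : ℕ) (h2 : 2 ≤ e) (hem : e ≤ m) (A : Finset ℕ)
    (hA : (↑A : Set ℕ) ⊆ Set.Icc 1 (m - 1)) (hcard : A.card = e - 1)
    (hgcd : (insert m A).gcd id = 1) :
    genSet ((fun a => m + a) '' ((↑A : Set ℕ) ∪ {0})) ∈ Cset m e ∧
    msg (genSet ((fun a => m + a) '' ((↑A : Set ℕ) ∪ {0}))) =
      (fun a => m + a) '' ((↑A : Set ℕ) ∪ {0}) := by
  rw [Set.union_singleton]
  set B := (fun a => m + a) '' insert 0 (↑A : Set ℕ)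
  have hmB : m ∈ B := ⟨0, Set.mem_insert _ _, rfl⟩
  have hBIco : B ⊆ Set.Ico m (2 * m) := by
    rintro _ ⟨a, rfl | ha, rfl⟩
    · simp only [Set.mem_Ico]; omega
    · have := hA ha
      simp only [Set.mem_Icc, Set.mem_Ico] at this ⊢
      omega
  have hgcdB : Nat.setGcd B = 1 := by
    rw [Nat.setGcd_image_add_insert_zero, ← Finset.coe_insert, Nat.setGcd_coe_finset, hgcd]
  have hcardB : B.ncard = e := by
    have h0A : 0 ∉ A := fun h => by simpa using hA h
    rw [Set.ncard_image_of_injective _ (add_right_injective m), ← Finset.coe_insert,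
      Set.ncard_coe_finset, Finset.card_insert_of_notMem h0A]
    omega
  have hmsg := msg_genSet_of_subset_Ico hBIco
  refine ⟨⟨⟨isNumericalSemigroup_genSet hgcdB,
    mult_genSet_of_isLeast (by omega) ⟨hmB, fun _ hb => (hBIco hb).1⟩, ?_⟩,
    isPacked_genSet hmB hBIco⟩, hmsg⟩
  rw [edim, hmsg, hcardB]
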